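/- arXiv:1511.02048 — 2 statements merged into one kernel-verified Lean document; each statement's English description precedes it below -/
import Mathlib

section
/- Fix integers r ≥ 3, k ≥ 2, and let d > d_{r,k} := inf{λ(r-1)!/(P[Po(λ) ≥ k-1])^{r-1} : λ > 0}. Then the largest fixed point p* of φ_{d,r,k}(p) = P[Po(d p^{r-1}/(r-1)!) ≥ k-1] on [0,1] is strictly positive. -/
/-- `poTail k x = P[Po(x) ≥ k-1] = 1 - ∑_{j=0}^{k-2} x^j e^{-x}/j!`. -/
noncomputable def poTail (k : ℕ) (x : ℝ) : ℝ :=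
  1 - ∑ j ∈ Finset.range (k - 1), x ^ j * Real.exp (-x) / (Nat.factorial j)

/-- `φ_{d,r,k}(p) = P[Po(d p^{r-1}/(r-1)!) ≥ k-1]`. -/
noncomputable def phiD (d : ℝ) (r k : ℕ) (p : ℝ) : ℝ :=
  poTail k (d * p ^ (r - 1) / (Nat.factorial (r - 1)))

/-- The k-core threshold `d_{r,k} = inf{λ(r-1)!/(P[Po(λ) ≥ k-1])^{r-1} : λ > 0}`. -/
noncomputable def dThresh (r k : ℕ) : ℝ :=
  sInf {x : ℝ | ∃ lam : ℝ, 0 < lam ∧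
    x = lam * (Nat.factorial (r - 1)) / (poTail k lam) ^ (r - 1)}

lemma poTail_le_one (k : ℕ) {x : ℝ} (hx : 0 ≤ x) : poTail k x ≤ 1 := by
  unfold poTail
  have h : 0 ≤ ∑ j ∈ Finset.range (k - 1), x ^ j * Real.exp (-x) / (Nat.factorial j) := by
    apply Finset.sum_nonneg
    intro j _
    positivity
  linarith

lemma poTail_pos (k : ℕ) {x : ℝ} (hx : 0 < x) : 0 < poTail k x := by
  unfold poTail
  have hsum : ∑ j ∈ Finset.range (k - 1), x ^ j / (Nat.factorial j) < Real.exp x := by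
    have h2 := Real.sum_le_exp_of_nonneg hx.le (k - 1 + 1)
    rw [Finset.sum_range_succ] at h2
    have hpos : (0:ℝ) < x ^ (k - 1) / (Nat.factorial (k - 1)) := by positivity
    linarith
  have hfac : ∑ j ∈ Finset.range (k - 1), x ^ j * Real.exp (-x) / (Nat.factorial j)
      = (∑ j ∈ Finset.range (k - 1), x ^ j / (Nat.factorial j)) * Real.exp (-x) := by
    rw [Finset.sum_mul]
    apply Finset.sum_congr rfl
    intro j _; ring
  rw [hfac]
  have hexp : (0:ℝ) < Real.exp (-x) := Real.exp_pos _
  have : (∑ j ∈ Finset.range (k - 1), x ^ j / (Nat.factorial j)) * Real.exp (-x)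
      < Real.exp x * Real.exp (-x) := by
    apply mul_lt_mul_of_pos_right hsum hexp
  rw [← Real.exp_add] at this
  simp at this
  linarith

lemma poTail_continuous (k : ℕ) : Continuous (poTail k) := by
  unfold poTail
  apply Continuous.sub continuous_const
  apply continuous_finset_sum
  intro j _
  exact ((continuous_pow j).mul (Real.continuous_exp.comp continuous_neg)).div_const _

/-- For `r ≥ 3`, `k ≥ 2` and `d > d_{r,k}`, the largest fixed point `p*` of
`φ_{d,r,k}` on `[0,1]` is strictly positive. -/
theorem stmt9 (r k : ℕ) (hr : 3 ≤ r) (hk : 2 ≤ k) (d : ℝ) (hd : dThresh r k < d)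
    (pstar : ℝ) (hmem : pstar ∈ Set.Icc (0 : ℝ) 1)
    (hfix : phiD d r k pstar = pstar)
    (hmax : ∀ p ∈ Set.Icc (0 : ℝ) 1, phiD d r k p = p → p ≤ pstar) :
    0 < pstar := by
  set S := {x : ℝ | ∃ lam : ℝ, 0 < lam ∧
    x = lam * (Nat.factorial (r - 1)) / (poTail k lam) ^ (r - 1)}
  have hSne : S.Nonempty := ⟨_, 1, one_pos, rfl⟩
  obtain ⟨x, hxS, hxd⟩ := exists_lt_of_csInf_lt hSne hd
  obtain ⟨lam, hlam, hxe⟩ := hxS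
  set T := poTail k lam with hT
  have hTpos : 0 < T := poTail_pos k hlam
  have hT1 : T ≤ 1 := poTail_le_one k hlam.le
  have hTr : 0 < T ^ (r - 1) := pow_pos hTpos _
  -- d > 0
  have hx0 : 0 < x := by
    rw [hxe]; exact div_pos (by positivity) hTr
  have hd0 : 0 < d := hx0.trans hxd
  -- from x < d: lam * (r-1)! < d * T^(r-1)
  have hkey : lam * (Nat.factorial (r - 1)) < d * T ^ (r - 1) := by
    rw [hxe, div_lt_iff₀ hTr] at hxd
    linarith
  -- define p0 with d * p0^(r-1)/(r-1)! = lam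
  set p0 := (lam * (Nat.factorial (r - 1)) / d) ^ ((1:ℝ) / (r - 1 : ℕ)) with hp0
  have hbase : 0 < lam * (Nat.factorial (r - 1)) / d := by positivity
  have hp0pos : 0 < p0 := Real.rpow_pos_of_pos hbase _
  have hr1 : (1:ℝ) ≤ (r - 1 : ℕ) := by
    have : 2 ≤ r - 1 := by omega
    exact_mod_cast Nat.one_le_iff_ne_zero.mpr (by omega)
  have hrne : ((r - 1 : ℕ) : ℝ) ≠ 0 := by positivity
  have hp0pow : p0 ^ (r - 1) = lam * (Nat.factorial (r - 1)) / d := by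
    rw [hp0, ← Real.rpow_natCast (_ ^ _) (r - 1), ← Real.rpow_mul hbase.le]
    rw [one_div, inv_mul_cancel₀ hrne, Real.rpow_one]
  have harg : d * p0 ^ (r - 1) / (Nat.factorial (r - 1)) = lam := by
    rw [hp0pow]
    field_simp
  -- φ(p0) = T > p0
  have hphi0 : phiD d r k p0 = T := by rw [phiD, harg]
  have hp0ltT : p0 < T := by
    have h1 : p0 ^ (r - 1) < T ^ (r - 1) := by
      rw [hp0pow, div_lt_iff₀ hd0]
      linarith
    by_contra hle
    push_neg at hle
    exact absurd (pow_le_pow_left₀ hTpos.le hle (r - 1)) (not_le.mpr h1)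
  have hp0le1 : p0 ≤ 1 := (hp0ltT.le.trans hT1)
  -- φ(1) ≤ 1
  have hphi1 : phiD d r k 1 ≤ 1 := by
    apply poTail_le_one
    positivity
  -- IVT on g = φ - id on [p0, 1]
  have hcont : ContinuousOn (fun p => phiD d r k p - p) (Set.Icc p0 1) := by
    apply Continuous.continuousOn
    apply Continuous.sub _ continuous_id
    unfold phiD
    exact (poTail_continuous k).comp
      (((continuous_const.mul (continuous_pow _)).div_const _))
  have hsub := intermediate_value_Icc' hp0le1 hcont
  have h0mem : (0:ℝ) ∈ Set.Icc ((fun p => phiD d r k p - p) 1) ((fun p => phiD d r k p - p) p0) := by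
    constructor
    · simp only; linarith
    · simp only [hphi0]; linarith
  obtain ⟨p, hpIcc, hpfix⟩ := hsub h0mem
  have hpfix' : phiD d r k p = p := by linarith [sub_eq_zero.mp hpfix]
  have hple : p ≤ pstar := hmax p ⟨le_trans hp0pos.le hpIcc.1, hpIcc.2⟩ hpfix'
  linarith [hpIcc.1]
end

section
/- Let F be a locally finite r-uniform factor graph. For every node x the limit lim_{t→∞} μ_x(t|F) exists, and x belongs to the k-core of F if and only if lim_{t→∞} μ_x(t|F) = 1. That is, the set of nodes whose WP marks stabilize at 1 is exactly the k-core. -/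
open scoped Classical

/-- A locally finite factor graph. -/
structure FactorGraph (V F : Type) where
  vnbr : V → Finset F
  fnbr : F → Finset V
  adj_symm : ∀ v a, a ∈ vnbr v ↔ v ∈ fnbr a

variable {V F : Type} [DecidableEq V] [DecidableEq F]

/-- Warning Propagation messages (variable-to-factor, factor-to-variable),
initialised to `1`. -/
def WPmsg (G : FactorGraph V F) (k r : ℕ) : ℕ → (V → F → Bool) × (F → V → Bool)
  | 0 => (fun _ _ => true, fun _ _ => true)
  | t + 1 =>
    (fun v a => decide (k - 1 ≤
        (((G.vnbr v).erase a).filter (fun b => (WPmsg G k r t).2 b v = true)).card),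
     fun a v => decide
        ((((G.fnbr a).erase v).filter (fun w => (WPmsg G k r t).1 w a = true)).card = r - 1))

/-- The WP mark `μ_v(t)` of a variable node. -/
def WPmarkV (G : FactorGraph V F) (k r : ℕ) (t : ℕ) (v : V) : Bool :=
  decide (k ≤ ((G.vnbr v).filter (fun a => (WPmsg G k r t).2 a v = true)).card)

/-- The WP mark `μ_a(t)` of a factor node. -/
def WPmarkF (G : FactorGraph V F) (k r : ℕ) (t : ℕ) (a : F) : Bool :=
  decide (((G.fnbr a).filter (fun v => (WPmsg G k r t).1 v a = true)).card = r)

/-- A pair of node sets is a "core pair" if every variable node in it has at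
least `k` factor-node neighbours in it and every factor node in it has all its
variable neighbours in it. -/
def IsCorePair (G : FactorGraph V F) (k : ℕ) (Cv : Set V) (Cf : Set F) : Prop :=
  (∀ v ∈ Cv, k ≤ ((G.vnbr v).filter (fun a => a ∈ Cf)).card) ∧
  (∀ a ∈ Cf, ∀ v ∈ G.fnbr a, v ∈ Cv)

/-- Variable nodes of the k-core: the union of all core pairs. -/
def coreV (G : FactorGraph V F) (k : ℕ) : Set V :=
  {v | ∃ Cv Cf, IsCorePair G k Cv Cf ∧ v ∈ Cv}

/-- Factor nodes of the k-core. -/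
def coreF (G : FactorGraph V F) (k : ℕ) : Set F :=
  {a | ∃ Cv Cf, IsCorePair G k Cv Cf ∧ a ∈ Cf}


open Filter

section Stmt13Aux

open Filter

variable {V F : Type} [DecidableEq V] [DecidableEq F]

private lemma msg1_succ' (G : FactorGraph V F) (k r t : ℕ) (v : V) (a : F) :
    (WPmsg G k r (t+1)).1 v a = decide (k - 1 ≤
      (((G.vnbr v).erase a).filter (fun b => (WPmsg G k r t).2 b v = true)).card) := rfl

private lemma msg2_succ' (G : FactorGraph V F) (k r t : ℕ) (a : F) (v : V) :
    (WPmsg G k r (t+1)).2 a v = decide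
      ((((G.fnbr a).erase v).filter (fun w => (WPmsg G k r t).1 w a = true)).card = r - 1) := rfl

/-- Messages between adjacent nodes are decreasing in `t`. -/
private lemma msg_mono (G : FactorGraph V F) (k r : ℕ)
    (huniform : ∀ a : F, (G.fnbr a).card = r) : ∀ t : ℕ,
    (∀ v a, a ∈ G.vnbr v → (WPmsg G k r (t+1)).1 v a = true → (WPmsg G k r t).1 v a = true) ∧
    (∀ a v, v ∈ G.fnbr a → (WPmsg G k r (t+1)).2 a v = true → (WPmsg G k r t).2 a v = true) := by
  intro t
  induction t with
  | zero => exact ⟨fun _ _ _ _ => rfl, fun _ _ _ _ => rfl⟩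
  | succ t ih =>
    constructor
    · intro v a _ h
      rw [msg1_succ'] at h ⊢
      rw [decide_eq_true_eq] at h ⊢
      refine h.trans (Finset.card_le_card ?_)
      intro b hb
      rw [Finset.mem_filter] at hb ⊢
      exact ⟨hb.1, ih.2 b v ((G.adj_symm v b).1 (Finset.mem_of_mem_erase hb.1)) hb.2⟩
    · intro a v hv h
      rw [msg2_succ'] at h ⊢
      rw [decide_eq_true_eq] at h ⊢
      have hT : ((G.fnbr a).erase v).card = r - 1 := by
        rw [Finset.card_erase_of_mem hv, huniform]
      have hfull : (((G.fnbr a).erase v).filter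
          (fun w => (WPmsg G k r (t+1)).1 w a = true)) = (G.fnbr a).erase v :=
        Finset.eq_of_subset_of_card_le (Finset.filter_subset _ _) (by rw [h, hT])
      have hall : ∀ w ∈ (G.fnbr a).erase v, (WPmsg G k r t).1 w a = true := by
        intro w hw
        have hw' : w ∈ ((G.fnbr a).erase v).filter
            (fun w => (WPmsg G k r (t+1)).1 w a = true) := by rw [hfull]; exact hw
        exact ih.1 w a ((G.adj_symm w a).2 (Finset.mem_of_mem_erase hw))
          ((Finset.mem_filter.1 hw').2)
      rw [Finset.filter_true_of_mem hall, hT]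

private lemma msg1_chain (G : FactorGraph V F) (k r : ℕ)
    (huniform : ∀ a : F, (G.fnbr a).card = r) {v : V} {a : F} (ha : a ∈ G.vnbr v)
    {s t : ℕ} (hst : s ≤ t) (h : (WPmsg G k r t).1 v a = true) :
    (WPmsg G k r s).1 v a = true := by
  induction t with
  | zero => exact (Nat.le_zero.1 hst) ▸ h
  | succ t ih =>
    rcases Nat.lt_succ_iff_lt_or_eq.1 (Nat.lt_succ_of_le hst) with h' | h'
    · exact ih (Nat.lt_succ_iff.1 h') ((msg_mono G k r huniform t).1 v a ha h)
    · exact h' ▸ h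

private lemma msg2_chain (G : FactorGraph V F) (k r : ℕ)
    (huniform : ∀ a : F, (G.fnbr a).card = r) {a : F} {v : V} (hv : v ∈ G.fnbr a)
    {s t : ℕ} (hst : s ≤ t) (h : (WPmsg G k r t).2 a v = true) :
    (WPmsg G k r s).2 a v = true := by
  induction t with
  | zero => exact (Nat.le_zero.1 hst) ▸ h
  | succ t ih =>
    rcases Nat.lt_succ_iff_lt_or_eq.1 (Nat.lt_succ_of_le hst) with h' | h'
    · exact ih (Nat.lt_succ_iff.1 h') ((msg_mono G k r huniform t).2 a v hv h)
    · exact h' ▸ h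

/-- Decreasing boolean sequences are eventually constant. -/
private lemma bool_dec_ev (f : ℕ → Bool)
    (hf : ∀ ⦃s t : ℕ⦄, s ≤ t → f t = true → f s = true) :
    ∃ b : Bool, ∀ᶠ t in atTop, f t = b := by
  by_cases h : ∀ t, f t = true
  · exact ⟨true, Eventually.of_forall h⟩
  · push_neg at h
    obtain ⟨t0, ht0⟩ := h
    refine ⟨false, eventually_atTop.2 ⟨t0, fun t ht => ?_⟩⟩
    cases hft : f t with
    | false => rfl
    | true => exact absurd (hf ht hft) ht0

private lemma bool_dec_ev_true (f : ℕ → Bool)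
    (hf : ∀ ⦃s t : ℕ⦄, s ≤ t → f t = true → f s = true) :
    (∀ᶠ t in atTop, f t = true) ↔ ∀ t, f t = true := by
  constructor
  · intro h t
    obtain ⟨N, hN⟩ := eventually_atTop.1 h
    exact hf (le_max_left t N) (hN _ (le_max_right t N))
  · exact fun h => Eventually.of_forall h

/-- The limit of the variable-to-factor message. -/
private noncomputable def L1 (G : FactorGraph V F) (k r : ℕ) (v : V) (a : F) : Bool :=
  decide (∀ t, (WPmsg G k r t).1 v a = true)

/-- The limit of the factor-to-variable message. -/
private noncomputable def L2 (G : FactorGraph V F) (k r : ℕ) (a : F) (v : V) : Bool :=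
  decide (∀ t, (WPmsg G k r t).2 a v = true)

private lemma msg1_ev (G : FactorGraph V F) (k r : ℕ)
    (huniform : ∀ a : F, (G.fnbr a).card = r) {v : V} {a : F} (ha : a ∈ G.vnbr v) :
    ∀ᶠ t in atTop, (WPmsg G k r t).1 v a = L1 G k r v a := by
  by_cases h : ∀ t, (WPmsg G k r t).1 v a = true
  · have hL : L1 G k r v a = true := decide_eq_true h
    exact Eventually.of_forall fun t => by rw [h t, hL]
  · have hL : L1 G k r v a = false := by simp [L1, h]
    push_neg at h
    obtain ⟨t0, ht0⟩ := h
    rw [hL]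
    refine eventually_atTop.2 ⟨t0, fun t ht => ?_⟩
    cases hft : (WPmsg G k r t).1 v a with
    | false => rfl
    | true => exact absurd (msg1_chain G k r huniform ha ht hft) ht0

private lemma msg2_ev (G : FactorGraph V F) (k r : ℕ)
    (huniform : ∀ a : F, (G.fnbr a).card = r) {a : F} {v : V} (hv : v ∈ G.fnbr a) :
    ∀ᶠ t in atTop, (WPmsg G k r t).2 a v = L2 G k r a v := by
  by_cases h : ∀ t, (WPmsg G k r t).2 a v = true
  · have hL : L2 G k r a v = true := decide_eq_true h
    exact Eventually.of_forall fun t => by rw [h t, hL]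
  · have hL : L2 G k r a v = false := by simp [L2, h]
    push_neg at h
    obtain ⟨t0, ht0⟩ := h
    rw [hL]
    refine eventually_atTop.2 ⟨t0, fun t ht => ?_⟩
    cases hft : (WPmsg G k r t).2 a v with
    | false => rfl
    | true => exact absurd (msg2_chain G k r huniform hv ht hft) ht0

end Stmt13Aux

section Stmt13Aux2

open Filter

variable {V F : Type} [DecidableEq V] [DecidableEq F]

/-- Fixed point equation for the limit variable-to-factor message. -/
private lemma L1_eq (G : FactorGraph V F) (k r : ℕ)
    (huniform : ∀ a : F, (G.fnbr a).card = r) {v : V} {a : F} (ha : a ∈ G.vnbr v) :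
    L1 G k r v a = decide (k - 1 ≤
      (((G.vnbr v).erase a).filter (fun b => L2 G k r b v = true)).card) := by
  obtain ⟨N1, h1⟩ := eventually_atTop.1 (msg1_ev G k r huniform ha)
  have h2' : ∀ᶠ t in atTop, ∀ b ∈ G.vnbr v, (WPmsg G k r t).2 b v = L2 G k r b v :=
    (Finset.eventually_all _).2 fun b hb => msg2_ev G k r huniform ((G.adj_symm v b).1 hb)
  obtain ⟨N2, h2⟩ := eventually_atTop.1 h2'
  set t := max N1 N2 with ht
  have e1 : (WPmsg G k r (t+1)).1 v a = L1 G k r v a :=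
    h1 (t+1) ((le_max_left N1 N2).trans (Nat.le_succ t))
  rw [← e1, msg1_succ']
  have e2 : ((G.vnbr v).erase a).filter (fun b => (WPmsg G k r t).2 b v = true) =
      ((G.vnbr v).erase a).filter (fun b => L2 G k r b v = true) :=
    Finset.filter_congr fun b hb => by
      rw [h2 t (le_max_right N1 N2) b (Finset.mem_of_mem_erase hb)]
  rw [e2]

/-- Fixed point equation for the limit factor-to-variable message. -/
private lemma L2_eq (G : FactorGraph V F) (k r : ℕ)
    (huniform : ∀ a : F, (G.fnbr a).card = r) {a : F} {v : V} (hv : v ∈ G.fnbr a) :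
    L2 G k r a v = decide
      ((((G.fnbr a).erase v).filter (fun w => L1 G k r w a = true)).card = r - 1) := by
  obtain ⟨N1, h1⟩ := eventually_atTop.1 (msg2_ev G k r huniform hv)
  have h2' : ∀ᶠ t in atTop, ∀ w ∈ G.fnbr a, (WPmsg G k r t).1 w a = L1 G k r w a :=
    (Finset.eventually_all _).2 fun w hw => msg1_ev G k r huniform ((G.adj_symm w a).2 hw)
  obtain ⟨N2, h2⟩ := eventually_atTop.1 h2'
  set t := max N1 N2 with ht
  have e1 : (WPmsg G k r (t+1)).2 a v = L2 G k r a v :=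
    h1 (t+1) ((le_max_left N1 N2).trans (Nat.le_succ t))
  rw [← e1, msg2_succ']
  have e2 : ((G.fnbr a).erase v).filter (fun w => (WPmsg G k r t).1 w a = true) =
      ((G.fnbr a).erase v).filter (fun w => L1 G k r w a = true) :=
    Finset.filter_congr fun w hw => by
      rw [h2 t (le_max_right N1 N2) w (Finset.mem_of_mem_erase hw)]
  rw [e2]

/-- The limit mark of a variable node. -/
private noncomputable def LV (G : FactorGraph V F) (k r : ℕ) (v : V) : Bool :=
  decide (k ≤ ((G.vnbr v).filter (fun a => L2 G k r a v = true)).card)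

/-- The limit mark of a factor node. -/
private noncomputable def LF (G : FactorGraph V F) (k r : ℕ) (a : F) : Bool :=
  decide (((G.fnbr a).filter (fun w => L1 G k r w a = true)).card = r)

private lemma markV_ev (G : FactorGraph V F) (k r : ℕ)
    (huniform : ∀ a : F, (G.fnbr a).card = r) (v : V) :
    ∀ᶠ t in atTop, WPmarkV G k r t v = LV G k r v := by
  have h2' : ∀ᶠ t in atTop, ∀ a ∈ G.vnbr v, (WPmsg G k r t).2 a v = L2 G k r a v :=
    (Finset.eventually_all _).2 fun a ha => msg2_ev G k r huniform ((G.adj_symm v a).1 ha)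
  filter_upwards [h2'] with t ht
  unfold WPmarkV LV
  rw [Finset.filter_congr fun a ha => by rw [ht a ha]]

private lemma markF_ev (G : FactorGraph V F) (k r : ℕ)
    (huniform : ∀ a : F, (G.fnbr a).card = r) (a : F) :
    ∀ᶠ t in atTop, WPmarkF G k r t a = LF G k r a := by
  have h2' : ∀ᶠ t in atTop, ∀ w ∈ G.fnbr a, (WPmsg G k r t).1 w a = L1 G k r w a :=
    (Finset.eventually_all _).2 fun w hw => msg1_ev G k r huniform ((G.adj_symm w a).2 hw)
  filter_upwards [h2'] with t ht
  unfold WPmarkF LF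
  rw [Finset.filter_congr fun w hw => by rw [ht w hw]]

/-- erasing one element loses at most one from the cardinality. -/
private lemma card_erase_ge {α : Type} [DecidableEq α] (s : Finset α) (a : α) :
    s.card - 1 ≤ (s.erase a).card := by
  by_cases h : a ∈ s
  · rw [Finset.card_erase_of_mem h]
  · rw [Finset.erase_eq_of_notMem h]
    exact Nat.sub_le _ _

/-- If the limit mark of a variable node is true, all its outgoing limit
messages are true. -/
private lemma LV_L1 (G : FactorGraph V F) (k r : ℕ)
    (huniform : ∀ a : F, (G.fnbr a).card = r) {v : V} (hv : LV G k r v = true)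
    {a : F} (ha : a ∈ G.vnbr v) : L1 G k r v a = true := by
  rw [L1_eq G k r huniform ha, decide_eq_true_eq]
  have h' : k ≤ ((G.vnbr v).filter (fun b => L2 G k r b v = true)).card :=
    of_decide_eq_true hv
  calc k - 1 ≤ ((G.vnbr v).filter (fun b => L2 G k r b v = true)).card - 1 :=
        Nat.sub_le_sub_right h' 1
    _ ≤ (((G.vnbr v).filter (fun b => L2 G k r b v = true)).erase a).card :=
        card_erase_ge _ _
    _ = (((G.vnbr v).erase a).filter (fun b => L2 G k r b v = true)).card := by
        rw [Finset.filter_erase]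

/-- If the limit mark of a factor node is true, all incoming limit messages
are true. -/
private lemma LF_L1 (G : FactorGraph V F) (k r : ℕ)
    (huniform : ∀ a : F, (G.fnbr a).card = r) {a : F} (ha : LF G k r a = true)
    {w : V} (hw : w ∈ G.fnbr a) : L1 G k r w a = true := by
  have h' : ((G.fnbr a).filter (fun w => L1 G k r w a = true)).card = r :=
    of_decide_eq_true ha
  have hfull : (G.fnbr a).filter (fun w => L1 G k r w a = true) = G.fnbr a :=
    Finset.eq_of_subset_of_card_le (Finset.filter_subset _ _) (by rw [h', huniform])
  have hw' : w ∈ (G.fnbr a).filter (fun w => L1 G k r w a = true) := by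
    rw [hfull]; exact hw
  exact (Finset.mem_filter.1 hw').2

end Stmt13Aux2

section Stmt13Aux3

open Filter

variable {V F : Type} [DecidableEq V] [DecidableEq F]

/-- If the limit mark of a factor node is true, its outgoing limit messages are true. -/
private lemma LF_L2 (G : FactorGraph V F) (k r : ℕ)
    (huniform : ∀ a : F, (G.fnbr a).card = r) {a : F} (ha : LF G k r a = true)
    {v : V} (hv : v ∈ G.fnbr a) : L2 G k r a v = true := by
  rw [L2_eq G k r huniform hv, decide_eq_true_eq]
  have hall : ∀ w ∈ (G.fnbr a).erase v, L1 G k r w a = true := fun w hw =>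
    LF_L1 G k r huniform ha (Finset.mem_of_mem_erase hw)
  rw [Finset.filter_true_of_mem hall, Finset.card_erase_of_mem hv, huniform]

/-- If the limit mark of a factor node is true, all its variable neighbours have
limit mark true. -/
private lemma LF_LV (G : FactorGraph V F) (k r : ℕ) (hk : 2 ≤ k)
    (huniform : ∀ a : F, (G.fnbr a).card = r) {a : F} (ha : LF G k r a = true)
    {v : V} (hv : v ∈ G.fnbr a) : LV G k r v = true := by
  have hva : a ∈ G.vnbr v := (G.adj_symm v a).2 hv
  have h1 : L1 G k r v a = true := LF_L1 G k r huniform ha hv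
  have h2 : L2 G k r a v = true := LF_L2 G k r huniform ha hv
  rw [L1_eq G k r huniform hva, decide_eq_true_eq] at h1
  rw [LV, decide_eq_true_eq]
  have hnotmem : a ∉ ((G.vnbr v).erase a).filter (fun b => L2 G k r b v = true) :=
    fun h => (Finset.mem_erase.1 (Finset.mem_filter.1 h).1).1 rfl
  have hsub : insert a (((G.vnbr v).erase a).filter (fun b => L2 G k r b v = true)) ⊆
      (G.vnbr v).filter (fun b => L2 G k r b v = true) := by
    intro b hb
    rcases Finset.mem_insert.1 hb with rfl | hb
    · exact Finset.mem_filter.2 ⟨hva, h2⟩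
    · have := Finset.mem_filter.1 hb
      exact Finset.mem_filter.2 ⟨Finset.mem_of_mem_erase this.1, this.2⟩
  calc k = (k - 1) + 1 := (Nat.succ_pred_eq_of_pos (by omega)).symm
    _ ≤ (((G.vnbr v).erase a).filter (fun b => L2 G k r b v = true)).card + 1 := by
        omega
    _ = (insert a (((G.vnbr v).erase a).filter (fun b => L2 G k r b v = true))).card := by
        rw [Finset.card_insert_of_notMem hnotmem]
    _ ≤ _ := Finset.card_le_card hsub

/-- If a limit message `L2 a v` is true and `v` has limit mark true, then the
limit mark of `a` is true. -/
private lemma L2_LF (G : FactorGraph V F) (k r : ℕ)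
    (huniform : ∀ a : F, (G.fnbr a).card = r) {v : V} {a : F} (hva : a ∈ G.vnbr v)
    (h2 : L2 G k r a v = true) (h1 : L1 G k r v a = true) : LF G k r a = true := by
  have hv : v ∈ G.fnbr a := (G.adj_symm v a).1 hva
  rw [L2_eq G k r huniform hv, decide_eq_true_eq] at h2
  have hT : ((G.fnbr a).erase v).card = r - 1 := by
    rw [Finset.card_erase_of_mem hv, huniform]
  have hfull : ((G.fnbr a).erase v).filter (fun w => L1 G k r w a = true) =
      (G.fnbr a).erase v :=
    Finset.eq_of_subset_of_card_le (Finset.filter_subset _ _) (by rw [h2, hT])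
  have hall : ∀ w ∈ G.fnbr a, L1 G k r w a = true := by
    intro w hw
    by_cases hwv : w = v
    · exact hwv ▸ h1
    · have hw' : w ∈ ((G.fnbr a).erase v).filter (fun w => L1 G k r w a = true) := by
        rw [hfull]; exact Finset.mem_erase.2 ⟨hwv, hw⟩
      exact (Finset.mem_filter.1 hw').2
  rw [LF, decide_eq_true_eq, Finset.filter_true_of_mem hall, huniform]

/-- The limit marks form a core pair. -/
private lemma corePair_limit (G : FactorGraph V F) (k r : ℕ) (hk : 2 ≤ k)
    (huniform : ∀ a : F, (G.fnbr a).card = r) :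
    IsCorePair G k {v | LV G k r v = true} {a | LF G k r a = true} := by
  constructor
  · intro v hv
    have h' : k ≤ ((G.vnbr v).filter (fun b => L2 G k r b v = true)).card :=
      of_decide_eq_true hv
    refine h'.trans (Finset.card_le_card ?_)
    intro a ha
    simp only [Finset.mem_filter] at ha ⊢
    exact ⟨ha.1, L2_LF G k r huniform ha.1 ha.2 (LV_L1 G k r huniform hv ha.1)⟩
  · intro a ha v hv
    exact LF_LV G k r hk huniform ha hv

/-- On a core pair, all WP messages stay true forever. -/
private lemma core_all (G : FactorGraph V F) (k r : ℕ)
    (huniform : ∀ a : F, (G.fnbr a).card = r) {Cv : Set V} {Cf : Set F}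
    (hcp : IsCorePair G k Cv Cf) : ∀ t : ℕ,
    (∀ v ∈ Cv, ∀ a : F, (WPmsg G k r t).1 v a = true) ∧
    (∀ a ∈ Cf, ∀ v ∈ G.fnbr a, (WPmsg G k r t).2 a v = true) := by
  intro t
  induction t with
  | zero => exact ⟨fun _ _ _ => rfl, fun _ _ _ _ => rfl⟩
  | succ t ih =>
    constructor
    · intro v hv a
      rw [msg1_succ', decide_eq_true_eq]
      have hsub : ((G.vnbr v).filter (fun b => b ∈ Cf)).erase a ⊆
          ((G.vnbr v).erase a).filter (fun b => (WPmsg G k r t).2 b v = true) := by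
        intro b hb
        simp only [Finset.mem_erase, Finset.mem_filter] at hb ⊢
        exact ⟨⟨hb.1, hb.2.1⟩, ih.2 b hb.2.2 v ((G.adj_symm v b).1 hb.2.1)⟩
      calc k - 1 ≤ ((G.vnbr v).filter (fun b => b ∈ Cf)).card - 1 :=
            Nat.sub_le_sub_right (hcp.1 v hv) 1
        _ ≤ (((G.vnbr v).filter (fun b => b ∈ Cf)).erase a).card := card_erase_ge _ _
        _ ≤ _ := Finset.card_le_card hsub
    · intro a ha v hv
      rw [msg2_succ', decide_eq_true_eq]
      have hall : ∀ w ∈ (G.fnbr a).erase v, (WPmsg G k r t).1 w a = true := fun w hw =>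
        ih.1 w (hcp.2 a ha w (Finset.mem_of_mem_erase hw)) a
      rw [Finset.filter_true_of_mem hall, Finset.card_erase_of_mem hv, huniform]

/-- On a core pair, variable marks stay true forever. -/
private lemma core_markV (G : FactorGraph V F) (k r : ℕ)
    (huniform : ∀ a : F, (G.fnbr a).card = r) {Cv : Set V} {Cf : Set F}
    (hcp : IsCorePair G k Cv Cf) {v : V} (hv : v ∈ Cv) (t : ℕ) :
    WPmarkV G k r t v = true := by
  rw [WPmarkV, decide_eq_true_eq]
  refine (hcp.1 v hv).trans (Finset.card_le_card ?_)
  intro a ha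
  simp only [Finset.mem_filter] at ha ⊢
  exact ⟨ha.1, (core_all G k r huniform hcp t).2 a ha.2 v ((G.adj_symm v a).1 ha.1)⟩

/-- On a core pair, factor marks stay true forever. -/
private lemma core_markF (G : FactorGraph V F) (k r : ℕ)
    (huniform : ∀ a : F, (G.fnbr a).card = r) {Cv : Set V} {Cf : Set F}
    (hcp : IsCorePair G k Cv Cf) {a : F} (ha : a ∈ Cf) (t : ℕ) :
    WPmarkF G k r t a = true := by
  rw [WPmarkF, decide_eq_true_eq]
  have hall : ∀ w ∈ G.fnbr a, (WPmsg G k r t).1 w a = true := fun w hw =>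
    (core_all G k r huniform hcp t).1 w (hcp.2 a ha w hw) a
  rw [Finset.filter_true_of_mem hall, huniform]

end Stmt13Aux3

/-- On a locally finite `r`-uniform factor graph, for every node the WP mark
stabilises (the limit as `t → ∞` exists), and a node belongs to the k-core iff
its WP mark stabilises at `1`. -/
theorem stmt13 (G : FactorGraph V F) (k r : ℕ) (hr : 3 ≤ r) (hk : 2 ≤ k)
    (huniform : ∀ a : F, (G.fnbr a).card = r) :
    (∀ v : V, ∃ b : Bool, ∀ᶠ t in atTop, WPmarkV G k r t v = b) ∧
    (∀ a : F, ∃ b : Bool, ∀ᶠ t in atTop, WPmarkF G k r t a = b) ∧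
    (∀ v : V, v ∈ coreV G k ↔ ∀ᶠ t in atTop, WPmarkV G k r t v = true) ∧
    (∀ a : F, a ∈ coreF G k ↔ ∀ᶠ t in atTop, WPmarkF G k r t a = true) := by
  refine ⟨fun v => ⟨LV G k r v, markV_ev G k r huniform v⟩,
    fun a => ⟨LF G k r a, markF_ev G k r huniform a⟩, ?_, ?_⟩
  · intro v
    constructor
    · rintro ⟨Cv, Cf, hcp, hv⟩
      exact Eventually.of_forall fun t => core_markV G k r huniform hcp hv t
    · intro h
      obtain ⟨t, h1, h2⟩ := (h.and (markV_ev G k r huniform v)).exists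
      have hLV : LV G k r v = true := by rw [← h2, h1]
      exact ⟨_, _, corePair_limit G k r hk huniform, hLV⟩
  · intro a
    constructor
    · rintro ⟨Cv, Cf, hcp, ha⟩
      exact Eventually.of_forall fun t => core_markF G k r huniform hcp ha t
    · intro h
      obtain ⟨t, h1, h2⟩ := (h.and (markF_ev G k r huniform a)).exists
      have hLF : LF G k r a = true := by rw [← h2, h1]
      exact ⟨_, _, corePair_limit G k r hk huniform, hLF⟩
end
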